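/- arXiv:2102.08741 — 3 statements merged into one kernel-verified Lean document; each statement's English description precedes it below -/
import Mathlib

section
/- In the field ℚ_p of p-adic numbers with p an odd prime, every nonzero element is a sum of at most 4 squares; in fact every element is a sum of at most 3 squares. -/
/-!
Choose `z` with `‖a‖ < ‖z‖ ^ 2`. Then `u = a / z ^ 2 - 1` has norm `1`, i.e. it is a unit of
`ℤ_[p]`. Its residue is a nonzero sum of two squares `s ^ 2 + t ^ 2` in `ZMod p`, say with
`t ≠ 0`; since `p` is odd, Hensel's lemma lifts a square root of `u - s ^ 2` from `t`, so
`u = x ^ 2 + y ^ 2` and `a = z ^ 2 + (z * x) ^ 2 + (z * y) ^ 2`.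
-/

open Polynomial

theorem IsUltrametricDist.norm_sub_eq_right_of_norm_lt {S : Type*} [SeminormedAddCommGroup S]
    [IsUltrametricDist S] {x y : S} (h : ‖x‖ < ‖y‖) : ‖x - y‖ = ‖y‖ := by
  rw [sub_eq_add_neg, norm_add_eq_max_of_norm_ne_norm (by rw [norm_neg]; exact h.ne), norm_neg,
    max_eq_right h.le]

namespace PadicInt

variable {p : ℕ} [Fact p.Prime]

theorem toZMod_ne_zero_iff_norm_eq_one {x : ℤ_[p]} : toZMod x ≠ 0 ↔ ‖x‖ = 1 := by
  rw [← isUnit_iff, Ne, ← RingHom.mem_ker, ker_toZMod, IsLocalRing.mem_maximalIdeal,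
    mem_nonunits_iff, not_not]

theorem exists_sq_eq_of_toZMod_eq_sq (hp : p ≠ 2) {c : ℤ_[p]} {t : ZMod p} (ht : t ≠ 0)
    (hc : toZMod c = t ^ 2) : ∃ x : ℤ_[p], x ^ 2 = c := by
  set a : ℤ_[p] := (t.val : ℤ_[p])
  have hta : toZMod a = t := by simp [a]
  have h2a : ‖2 * a‖ = 1 := by
    refine toZMod_ne_zero_iff_norm_eq_one.mp ?_
    rw [map_mul, map_ofNat, hta]
    exact mul_ne_zero (Ring.two_ne_zero (by rwa [ZMod.ringChar_zmod_n])) ht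
  have hres : ‖a ^ 2 - c‖ < 1 := by
    rw [← not_le, (norm_le_one _).ge_iff_eq, ← toZMod_ne_zero_iff_norm_eq_one]
    simp [hta, hc]
  have hF : aeval a (X ^ 2 - C c) = a ^ 2 - c := by simp
  have hF' : aeval a (derivative (X ^ 2 - C c)) = 2 * a := by simp [one_add_one_eq_two]
  obtain ⟨x, hx, -⟩ := hensels_lemma (F := X ^ 2 - C c) (a := a) (by
    rwa [hF, hF', h2a, one_pow])
  exact ⟨x, by simpa [sub_eq_zero] using hx⟩

theorem exists_sq_add_sq_of_norm_eq_one (hp : p ≠ 2) {u : ℤ_[p]} (hu : ‖u‖ = 1) :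
    ∃ x y : ℤ_[p], u = x ^ 2 + y ^ 2 := by
  obtain ⟨s, t, hst⟩ := ZMod.sq_add_sq p (toZMod u)
  wlog ht : t ≠ 0 generalizing s t
  · have hs : s ≠ 0 := by
      rintro rfl
      refine toZMod_ne_zero_iff_norm_eq_one.mpr hu ?_
      simp [← hst, not_not.mp ht]
    obtain ⟨x, y, hxy⟩ := this t s (by rw [← hst, add_comm]) hs
    exact ⟨y, x, by rw [hxy, add_comm]⟩
  obtain ⟨y, hy⟩ := exists_sq_eq_of_toZMod_eq_sq hp ht (c := u - (s.val : ℤ_[p]) ^ 2)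
    (by simp [← hst])
  exact ⟨s.val, y, by rw [hy]; ring⟩

end PadicInt

theorem Padic.exists_sq_add_sq_of_norm_eq_one {p : ℕ} [Fact p.Prime] (hp : p ≠ 2) {u : ℚ_[p]}
    (hu : ‖u‖ = 1) : ∃ x y : ℚ_[p], u = x ^ 2 + y ^ 2 := by
  obtain ⟨x, y, hxy⟩ := PadicInt.exists_sq_add_sq_of_norm_eq_one hp (u := ⟨u, hu.le⟩) hu
  exact ⟨x, y, by simpa using congrArg ((↑) : ℤ_[p] → ℚ_[p]) hxy⟩

theorem padic_sum_three_squares (p : ℕ) [Fact p.Prime] (hp : p ≠ 2) :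
    ∀ a : ℚ_[p], ∃ x y z : ℚ_[p], a = x ^ 2 + y ^ 2 + z ^ 2 := by
  intro a
  obtain ⟨z, hz⟩ := NormedField.exists_lt_norm ℚ_[p] √‖a‖
  have hz0 : z ≠ 0 := norm_pos_iff.mp ((Real.sqrt_nonneg _).trans_lt hz)
  have hsmall : ‖a / z ^ 2‖ < ‖(1 : ℚ_[p])‖ := by
    rw [norm_div, norm_pow, norm_one, div_lt_one (by positivity)]
    exact (Real.sqrt_lt' (norm_pos_iff.mpr hz0)).mp hz
  obtain ⟨x, y, hxy⟩ := Padic.exists_sq_add_sq_of_norm_eq_one hp (u := a / z ^ 2 - 1)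
    (by rw [IsUltrametricDist.norm_sub_eq_right_of_norm_lt hsmall, norm_one])
  refine ⟨z, z * x, z * y, ?_⟩
  rw [sub_eq_iff_eq_add, div_eq_iff (pow_ne_zero 2 hz0)] at hxy
  linear_combination hxy
end

section
/- The Pythagoras number of ℚ is 4: every rational number that is a sum of squares is a sum of 4 squares, and there exists a rational number (e.g. 7) that is a sum of squares but not a sum of 3 squares. -/
/-!
Lagrange's four-square theorem applied to the integer `q * q.den ^ 2 = q.num * q.den` writes every
nonnegative rational as a sum of four squares. On the other hand, clearing denominators in
`x ^ 2 + y ^ 2 + z ^ 2 = 7` gives integers with `a ^ 2 + b ^ 2 + c ^ 2 = 7 * d ^ 2`, `d ≠ 0`; reducing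
mod 8 forces `a, b, c, d` all even, and halving them is an infinite descent.
-/

theorem Rat.exists_eq_sq_add_sq_add_sq_add_sq_of_nonneg {q : ℚ} (hq : 0 ≤ q) :
    ∃ a b c d : ℚ, q = a ^ 2 + b ^ 2 + c ^ 2 + d ^ 2 := by
  obtain ⟨a, b, c, d, habcd⟩ := Nat.sum_four_squares (q.num.toNat * q.den)
  refine ⟨a / q.den, b / q.den, c / q.den, d / q.den, ?_⟩
  have hnum : (q.num.toNat : ℚ) = q * q.den := by
    rw [Rat.mul_den_eq_num, ← Int.cast_natCast, Int.toNat_of_nonneg (Rat.num_nonneg.2 hq)]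
  field_simp
  rw [← Nat.cast_inj (R := ℚ)] at habcd
  push_cast at habcd
  rw [habcd, hnum]
  ring

theorem Int.two_dvd_of_sq_add_sq_add_sq_eq_seven_mul_sq {a b c d : ℤ}
    (h : a ^ 2 + b ^ 2 + c ^ 2 = 7 * d ^ 2) : 2 ∣ a ∧ 2 ∣ b ∧ 2 ∣ c ∧ 2 ∣ d := by
  -- Squares are `1` mod 8 if odd and `0` or `4` if even, while `7 * d ^ 2` is `7` mod 8 if `d` is odd.
  have mod_eight : ∀ a b c d : ZMod 8, a ^ 2 + b ^ 2 + c ^ 2 = 7 * d ^ 2 →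
      ∀ x ∈ [a, b, c, d], ZMod.castHom (by norm_num : 2 ∣ 8) (ZMod 2) x = 0 := by
    decide
  have h8 : (a : ZMod 8) ^ 2 + (b : ZMod 8) ^ 2 + (c : ZMod 8) ^ 2 = 7 * (d : ZMod 8) ^ 2 := by
    exact_mod_cast congrArg (Int.cast : ℤ → ZMod 8) h
  have := mod_eight _ _ _ _ h8
  simp only [List.mem_cons, List.not_mem_nil, forall_eq_or_imp, false_implies, implies_true,
    and_true, map_intCast, ZMod.intCast_zmod_eq_zero_iff_dvd] at this
  exact_mod_cast this

theorem Int.eq_zero_of_sq_add_sq_add_sq_eq_seven_mul_sq {a b c d : ℤ}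
    (h : a ^ 2 + b ^ 2 + c ^ 2 = 7 * d ^ 2) : d = 0 := by
  induction hn : d.natAbs using Nat.strong_induction_on generalizing a b c d with
  | _ n ih =>
  obtain ⟨⟨a, rfl⟩, ⟨b, rfl⟩, ⟨c, rfl⟩, ⟨d, rfl⟩⟩ :=
    Int.two_dvd_of_sq_add_sq_add_sq_eq_seven_mul_sq h
  have h' : a ^ 2 + b ^ 2 + c ^ 2 = 7 * d ^ 2 :=
    mul_left_cancel₀ (four_ne_zero (α := ℤ)) (by linear_combination h)
  by_contra hd
  exact hd (by rw [ih d.natAbs (by omega) h' rfl, mul_zero])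

theorem Rat.sum_sq_fin_three_ne_seven (x : Fin 3 → ℚ) : ∑ i, x i ^ 2 ≠ 7 := by
  intro hx
  obtain ⟨⟨m, hm⟩, hmx⟩ := IsLocalization.exist_integer_multiples_of_finite (nonZeroDivisors ℤ) x
  choose y hy using hmx
  simp only [algebraMap_int_eq, eq_intCast, zsmul_eq_mul] at hy
  have hZ : y 0 ^ 2 + y 1 ^ 2 + y 2 ^ 2 = 7 * m ^ 2 := by
    have : ((y 0 ^ 2 + y 1 ^ 2 + y 2 ^ 2 : ℤ) : ℚ) = (7 * m ^ 2 : ℤ) := by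
      rw [Fin.sum_univ_three] at hx
      push_cast
      rw [hy, hy, hy, ← hx]
      ring
    exact_mod_cast this
  exact nonZeroDivisors.ne_zero hm (Int.eq_zero_of_sq_add_sq_add_sq_eq_seven_mul_sq hZ)

theorem pythagoras_number_rat_eq_four :
    (∀ a : ℚ, (∃ n, ∃ x : Fin n → ℚ, a = ∑ i, x i ^ 2) →
        ∃ x : Fin 4 → ℚ, a = ∑ i, x i ^ 2) ∧
      (∃ n, ∃ x : Fin n → ℚ, (7 : ℚ) = ∑ i, x i ^ 2) ∧
      ¬ ∃ x : Fin 3 → ℚ, (7 : ℚ) = ∑ i, x i ^ 2 := by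
  refine ⟨?_, ⟨4, ![2, 1, 1, 1], by simp [Fin.sum_univ_four]; norm_num⟩, ?_⟩
  · rintro a ⟨n, x, rfl⟩
    obtain ⟨p, q, r, s, h⟩ :=
      Rat.exists_eq_sq_add_sq_add_sq_add_sq_of_nonneg (q := ∑ i, x i ^ 2) (by positivity)
    exact ⟨![p, q, r, s], by simp [Fin.sum_univ_four, h]⟩
  · rintro ⟨x, hx⟩
    exact Rat.sum_sq_fin_three_ne_seven x hx.symm
end

section
/- If a is a positive rational number and a is a sum of two squares in ℚ_p for every prime p (including p = 2), then a is a sum of two squares in ℚ. -/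
/-!
Only the primes `q ≡ 3 [MOD 4]` matter, by Fermat's two-squares theorem: a positive integer is a
sum of two squares iff every such prime divides it to an even power. Over `ℚ_[q]`, with `‖y‖ ≤ ‖x‖`
we have `x ^ 2 + y ^ 2 = x ^ 2 * (1 + t ^ 2)` for a `q`-adic integer `t`, and `1 + t ^ 2` is a unit
because `-1` is not a square mod `q`; so local representability forces the `q`-adic valuation of `a`
to be even. Writing `a = a.num * a.den / a.den ^ 2` transfers this to the integer `a.num * a.den`.
-/

namespace PadicInt

variable {p : ℕ} [Fact p.Prime]

theorem valuation_eq_zero_of_isUnit {u : ℤ_[p]} (hu : IsUnit u) : u.valuation = 0 := by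
  obtain ⟨v, hv⟩ := hu.exists_right_inv
  have h := congrArg valuation hv
  rw [valuation_mul hu.ne_zero (right_ne_zero_of_mul_eq_one hv), valuation_one] at h
  omega

theorem isUnit_one_add_sq (hp : p % 4 = 3) (t : ℤ_[p]) : IsUnit (1 + t ^ 2) := by
  by_contra hunit
  have hzero : toZMod (1 + t ^ 2) = 0 := by
    rw [← RingHom.mem_ker, ker_toZMod]
    exact hunit
  have hsum : (1 : ZMod p) + toZMod t ^ 2 = 0 := by simpa using hzero
  have hsq : IsSquare (-1 : ZMod p) := ⟨toZMod t, by linear_combination -hsum⟩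
  exact ZMod.exists_sq_eq_neg_one_iff.mp hsq hp

end PadicInt

namespace Padic

variable {p : ℕ} [Fact p.Prime]

theorem even_valuation_sq_add_sq (hp : p % 4 = 3) (x y : ℚ_[p]) :
    Even (x ^ 2 + y ^ 2).valuation := by
  wlog hyx : ‖y‖ ≤ ‖x‖ generalizing x y
  · simpa only [add_comm] using this y x (le_of_not_ge hyx)
  rcases eq_or_ne x 0 with rfl | hx
  · simp [norm_eq_zero.mp (le_antisymm (by simpa using hyx) (norm_nonneg y))]
  let t : ℤ_[p] := ⟨y / x, by rw [norm_div]; exact div_le_one_of_le₀ hyx (norm_nonneg x)⟩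
  have hunit := PadicInt.isUnit_one_add_sq hp t
  have hfac : x ^ 2 + y ^ 2 = x ^ 2 * ((1 + t ^ 2 : ℤ_[p]) : ℚ_[p]) := by
    change x ^ 2 + y ^ 2 = x ^ 2 * (1 + (y / x) ^ 2)
    field_simp
  rw [hfac, valuation_mul (pow_ne_zero 2 hx) (PadicInt.coe_ne_zero.2 hunit.ne_zero),
    PadicInt.valuation_coe, PadicInt.valuation_eq_zero_of_isUnit hunit, valuation_pow]
  simp

end Padic

namespace Rat

theorem even_padicValNat_num_natAbs_mul_den_iff {p : ℕ} [Fact p.Prime] {a : ℚ} (ha : a ≠ 0) :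
    Even (padicValNat p (a.num.natAbs * a.den)) ↔ Even (padicValRat p a) := by
  rw [padicValNat.mul (by simpa using ha) a.den_ne_zero, padicValRat, padicValInt]
  rw [Int.even_sub, Nat.even_add, Int.even_coe_nat, Int.even_coe_nat]

theorem exists_sq_add_sq_of_num_natAbs_mul_den {a : ℚ} (ha : 0 ≤ a)
    (h : ∃ x y : ℕ, a.num.natAbs * a.den = x ^ 2 + y ^ 2) : ∃ x y : ℚ, a = x ^ 2 + y ^ 2 := by
  obtain ⟨x, y, hxy⟩ := h
  refine ⟨x / a.den, y / a.den, ?_⟩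
  have hnum : (a.num.natAbs : ℚ) = a.num := by
    rw [Nat.cast_natAbs, Int.cast_abs, abs_of_nonneg (by exact_mod_cast num_nonneg.mpr ha)]
  have hxy' : (a.num : ℚ) * a.den = x ^ 2 + y ^ 2 := by
    rw [← hnum]
    exact_mod_cast hxy
  have hden : (a.den : ℚ) ≠ 0 := by exact_mod_cast a.den_ne_zero
  rw [div_pow, div_pow, ← add_div, ← hxy', eq_div_iff (pow_ne_zero 2 hden), sq, ← mul_assoc,
    mul_den_eq_num]

end Rat

theorem hasse_minkowski_two_squares (a : ℚ) (ha : 0 < a)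
    (h : ∀ (p : ℕ) [Fact p.Prime], ∃ x y : ℚ_[p], (a : ℚ_[p]) = x ^ 2 + y ^ 2) :
    ∃ x y : ℚ, a = x ^ 2 + y ^ 2 := by
  apply Rat.exists_sq_add_sq_of_num_natAbs_mul_den ha.le
  rw [Nat.eq_sq_add_sq_iff]
  intro q hq hq3
  have : Fact q.Prime := ⟨Nat.prime_of_mem_primeFactors hq⟩
  obtain ⟨x, y, hxy⟩ := h q
  rw [Rat.even_padicValNat_num_natAbs_mul_den_iff ha.ne', ← Padic.valuation_ratCast, hxy]
  exact Padic.even_valuation_sq_add_sq hq3 x y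
end
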